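/- arXiv:2006.12407 — 2 statements merged into one kernel-verified Lean document; each statement's English description precedes it below -/
import Mathlib

section
/- Energy differential inequality for the lattice FitzHugh-Nagumo system: with C₁ = δ/(2b), any solution of the system x_i' = a(x_{i-1}-2x_i+x_{i+1}) + f(x_i) - b y_i + p u_i, y_i' = c x_i - δ y_i (with periodic boundary and feedback as specified) satisfies d/dt ∑_{i=1}^n (C₁ x_i² + y_i²) + δ ∑_{i=1}^n (C₁ x_i² + y_i²) ≤ n(C₂ + δβ/b), where C₂ = (b/(4δλ))(δ²/(2b) + δ/2 + 2c²/δ)². -/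
/-!
Multiply the `x_i`-equation by `2 C₁ x_i` and the `y_i`-equation by `2 y_i`; with `C₁ = δ / (2b)`
the coupling terms combine to `(2c - δ) x_i y_i`. By summation by parts and periodicity the
diffusion contributes `-2 C₁ a ∑ (x_{i+1} - x_i)²`, and the feedback contributes
`-2 C₁ p (x_n - x_1)²`. What remains splits into independent sites, each bounded by
`C₂ + δβ/b`: Young's inequality absorbs `x_i y_i` into `x_i²` and `-δ y_i²`, and the dissipativity
`f(s) s ≤ -λ s⁴ + β` dominates the resulting `x_i²` term after completing the square in `x_i²`.
-/

open Finset

theorem sum_mul_laplacian_of_periodic {n : ℕ} {g : ℕ → ℝ} (h0 : g 0 = g n)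
    (h1 : g (n + 1) = g 1) :
    ∑ i ∈ Icc 1 n, g i * (g (i - 1) - 2 * g i + g (i + 1))
      = -∑ i ∈ Icc 1 n, (g (i + 1) - g i) ^ 2 := by
  obtain rfl | hn := Nat.eq_zero_or_pos n
  · simp
  -- each summand plus `(g (i + 1) - g i) ^ 2` telescopes in `g i ^ 2 - g i * g (i - 1)`
  have key := sum_Icc_sub (m := 1) hn fun i => g i ^ 2 - g i * g (i - 1)
  simp only [Nat.add_sub_cancel, h1, Nat.sub_self, h0, sub_self] at key
  rw [eq_neg_iff_add_eq_zero, ← sum_add_distrib, ← key]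
  exact sum_congr rfl fun i _ => by ring

theorem sum_mul_feedback {n : ℕ} (hn : 1 ≤ n) (g : ℕ → ℝ) :
    ∑ i ∈ Icc 1 n, g i * (if i = 1 then g n - g 1 else if i = n then g 1 - g n else 0)
      = -(g n - g 1) ^ 2 := by
  obtain rfl | hn := eq_or_lt_of_le hn
  · simp
  have hsub : ({1, n} : Finset ℕ) ⊆ Icc 1 n := by
    simp [insert_subset_iff, hn.le]
  rw [← sum_subset hsub, sum_pair hn.ne, if_pos rfl, if_neg hn.ne', if_pos rfl]
  · ring
  · intro i _ hi
    simp only [mem_insert, mem_singleton, not_or] at hi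
    rw [if_neg hi.1, if_neg hi.2, mul_zero]

theorem mul_mul_sub_mul_sq_le {c δ : ℝ} (hδ : 0 < δ) (X Y : ℝ) :
    (2 * c - δ) * (X * Y) - δ * Y ^ 2 ≤ (δ / 2 + 2 * c ^ 2 / δ) * X ^ 2 := by
  have key : δ * ((δ / 2 + 2 * c ^ 2 / δ) * X ^ 2 - ((2 * c - δ) * (X * Y) - δ * Y ^ 2))
      = ((2 * c * X - δ * Y) ^ 2 + (δ * X + δ * Y) ^ 2) / 2 := by
    field_simp
    ring
  rw [← sub_nonneg, ← mul_nonneg_iff_of_pos_left hδ, key]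
  positivity

theorem neg_mul_pow_four_add_mul_sq_le {M : ℝ} (hM : 0 < M) (K X : ℝ) :
    -M * X ^ 4 + K * X ^ 2 ≤ K ^ 2 / (4 * M) := by
  rw [le_div_iff₀ (by positivity)]
  nlinarith [sq_nonneg (2 * M * X ^ 2 - K)]

theorem fhn_site_bound {b c δ lam β F X Y : ℝ} (hb : 0 < b) (hδ : 0 < δ) (hlam : 0 < lam)
    (hF : F * X ≤ -lam * X ^ 4 + β) :
    δ / b * (F * X) + (2 * c - δ) * (X * Y) - δ * Y ^ 2 + δ ^ 2 / (2 * b) * X ^ 2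
      ≤ b / (4 * δ * lam) * (δ ^ 2 / (2 * b) + δ / 2 + 2 * c ^ 2 / δ) ^ 2 + δ * β / b := by
  have hreaction : δ / b * (F * X) ≤ δ / b * (-lam * X ^ 4 + β) :=
    mul_le_mul_of_nonneg_left hF (div_pos hδ hb).le
  have hcross := mul_mul_sub_mul_sq_le (c := c) hδ X Y
  have hquartic := neg_mul_pow_four_add_mul_sq_le (by positivity : 0 < δ * lam / b)
    (δ ^ 2 / (2 * b) + δ / 2 + 2 * c ^ 2 / δ) X
  have hconst : ∀ K : ℝ, K ^ 2 / (4 * (δ * lam / b)) = b / (4 * δ * lam) * K ^ 2 := by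
    intro K
    field_simp
  rw [hconst] at hquartic
  linear_combination hreaction + hcross + hquartic

theorem hasDerivAt_sum_weighted_sq {ι : Type*} {S : Finset ι} (C : ℝ) {x y : ι → ℝ → ℝ}
    {x' y' : ι → ℝ} {t : ℝ} (hx : ∀ i ∈ S, HasDerivAt (x i) (x' i) t)
    (hy : ∀ i ∈ S, HasDerivAt (y i) (y' i) t) :
    HasDerivAt (fun s => ∑ i ∈ S, (C * x i s ^ 2 + y i s ^ 2))
      (∑ i ∈ S, (C * (2 * x i t * x' i) + 2 * y i t * y' i)) t := by
  refine HasDerivAt.fun_sum fun i hi => ?_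
  have hx2 := (hx i hi).pow 2
  have hy2 := (hy i hi).pow 2
  norm_num at hx2 hy2
  exact (hx2.const_mul C).add hy2

theorem fhn_energy_rate_le {n : ℕ} (hn : 1 ≤ n) {a b c δ p lam β : ℝ} (ha : 0 ≤ a) (hb : 0 < b)
    (hδ : 0 < δ) (hp : 0 ≤ p) (hlam : 0 < lam) {f : ℝ → ℝ}
    (hf : ∀ s, f s * s ≤ -lam * s ^ 4 + β) {X Y : ℕ → ℝ} (h0 : X 0 = X n) (h1 : X (n + 1) = X 1) :
    ∑ i ∈ Icc 1 n, (δ / (2 * b) * (2 * X i *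
        (a * (X (i - 1) - 2 * X i + X (i + 1)) + f (X i) - b * Y i
          + p * (if i = 1 then X n - X 1 else if i = n then X 1 - X n else 0)))
        + 2 * Y i * (c * X i - δ * Y i))
      + δ * ∑ i ∈ Icc 1 n, (δ / (2 * b) * X i ^ 2 + Y i ^ 2)
      ≤ n * (b / (4 * δ * lam) * (δ ^ 2 / (2 * b) + δ / 2 + 2 * c ^ 2 / δ) ^ 2
          + δ * β / b) := by
  have hsplit : ∑ i ∈ Icc 1 n, (δ / (2 * b) * (2 * X i *
        (a * (X (i - 1) - 2 * X i + X (i + 1)) + f (X i) - b * Y i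
          + p * (if i = 1 then X n - X 1 else if i = n then X 1 - X n else 0)))
        + 2 * Y i * (c * X i - δ * Y i))
      + δ * ∑ i ∈ Icc 1 n, (δ / (2 * b) * X i ^ 2 + Y i ^ 2)
      = δ / b * a * ∑ i ∈ Icc 1 n, X i * (X (i - 1) - 2 * X i + X (i + 1))
        + δ / b * p * ∑ i ∈ Icc 1 n,
            X i * (if i = 1 then X n - X 1 else if i = n then X 1 - X n else 0)
        + ∑ i ∈ Icc 1 n, (δ / b * (f (X i) * X i) + (2 * c - δ) * (X i * Y i) - δ * Y i ^ 2
            + δ ^ 2 / (2 * b) * X i ^ 2) := by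
    simp only [mul_sum, ← sum_add_distrib]
    refine sum_congr rfl fun i _ => ?_
    field_simp
    ring
  have hdiffusion : δ / b * a * -∑ i ∈ Icc 1 n, (X (i + 1) - X i) ^ 2 ≤ 0 :=
    mul_nonpos_of_nonneg_of_nonpos (by positivity)
      (neg_nonpos.mpr (sum_nonneg fun i _ => sq_nonneg _))
  have hfeedback : δ / b * p * -(X n - X 1) ^ 2 ≤ 0 :=
    mul_nonpos_of_nonneg_of_nonpos (by positivity) (neg_nonpos.mpr (sq_nonneg _))
  have hsites := sum_le_card_nsmul (Icc 1 n) _ _ fun i _ =>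
    fhn_site_bound (c := c) (Y := Y i) hb hδ hlam (hf (X i))
  rw [Nat.card_Icc, Nat.add_sub_cancel, nsmul_eq_mul] at hsites
  rw [hsplit, sum_mul_laplacian_of_periodic h0 h1, sum_mul_feedback hn]
  linarith

theorem fhn_energy_differential_inequality_general
    (n : ℕ) (hn : 4 ≤ n)
    (a b c δ p lam β : ℝ)
    (ha : 0 < a) (hb : 0 < b) (hδ : 0 < δ) (hp : 0 < p)
    (hlam : 0 < lam)
    (f : ℝ → ℝ)
    (hf1 : ∀ s : ℝ, f s * s ≤ -lam * s^4 + β)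
    (x y : ℕ → ℝ → ℝ)
    (hbx0 : ∀ t : ℝ, x 0 t = x n t) (hbx1 : ∀ t : ℝ, x (n + 1) t = x 1 t)
    (hxode : ∀ i ∈ Finset.Icc 1 n, ∀ t ≥ (0:ℝ),
      HasDerivAt (x i)
        (a * (x (i - 1) t - 2 * x i t + x (i + 1) t) + f (x i t) - b * y i t
          + p * (if i = 1 then x n t - x 1 t else if i = n then x 1 t - x n t else 0)) t)
    (hyode : ∀ i ∈ Finset.Icc 1 n, ∀ t ≥ (0:ℝ),
      HasDerivAt (y i) (c * x i t - δ * y i t) t) :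
    ∀ t ≥ (0:ℝ), ∀ d : ℝ,
      HasDerivAt (fun s => ∑ i ∈ Finset.Icc 1 n,
          ((δ / (2 * b)) * (x i s)^2 + (y i s)^2)) d t →
      d + δ * (∑ i ∈ Finset.Icc 1 n, ((δ / (2 * b)) * (x i t)^2 + (y i t)^2))
        ≤ n * ((b / (4 * δ * lam)) * (δ^2 / (2 * b) + δ / 2 + 2 * c^2 / δ)^2
            + δ * β / b) := by
  intro t ht d hd
  rw [hd.unique (hasDerivAt_sum_weighted_sq _ (fun i hi => hxode i hi t ht)
    (fun i hi => hyode i hi t ht))]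
  exact fhn_energy_rate_le (by omega) ha.le hb hδ hp.le hlam hf1 (hbx0 t) (hbx1 t)

/-- Energy differential inequality for the lattice FitzHugh-Nagumo system. -/
theorem fhn_energy_differential_inequality
    (n : ℕ) (hn : 4 ≤ n)
    (a b c δ p lam β : ℝ)
    (ha : 0 < a) (hb : 0 < b) (hc : 0 < c) (hδ : 0 < δ) (hp : 0 < p)
    (hlam : 0 < lam) (hβ : 0 < β)
    (f : ℝ → ℝ) (hf : ContDiff ℝ 1 f)
    (hf1 : ∀ s : ℝ, f s * s ≤ -lam * s^4 + β)
    (x y : ℕ → ℝ → ℝ)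
    (hbx0 : ∀ t : ℝ, x 0 t = x n t) (hbx1 : ∀ t : ℝ, x (n + 1) t = x 1 t)
    (hxode : ∀ i ∈ Finset.Icc 1 n, ∀ t ≥ (0:ℝ),
      HasDerivAt (x i)
        (a * (x (i - 1) t - 2 * x i t + x (i + 1) t) + f (x i t) - b * y i t
          + p * (if i = 1 then x n t - x 1 t else if i = n then x 1 t - x n t else 0)) t)
    (hyode : ∀ i ∈ Finset.Icc 1 n, ∀ t ≥ (0:ℝ),
      HasDerivAt (y i) (c * x i t - δ * y i t) t) :
    ∀ t ≥ (0:ℝ), ∀ d : ℝ,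
      HasDerivAt (fun s => ∑ i ∈ Finset.Icc 1 n,
          ((δ / (2 * b)) * (x i s)^2 + (y i s)^2)) d t →
      d + δ * (∑ i ∈ Finset.Icc 1 n, ((δ / (2 * b)) * (x i t)^2 + (y i t)^2))
        ≤ n * ((b / (4 * δ * lam)) * (δ^2 / (2 * b) + δ / 2 + 2 * c^2 / δ)^2
            + δ * β / b) :=
  fhn_energy_differential_inequality_general n hn a b c δ p lam β ha hb hδ hp hlam f hf1 x y hbx0
    hbx1 hxode hyode
end

section
/- Differenced-system differential inequality: let V_i = x_i - x_{i-1}, W_i = y_i - y_{i-1} for a solution of the FHN CNN with boundary feedback. Then d/dt ∑_{i=1}^n (V_i² + W_i²) + 2δ ∑_{i=1}^n (V_i² + W_i²) + 4p(x_n - x₁)² ≤ ∑_{i=1}^n 2[(δ+γ)V_i² + |c-b|(V_i² + W_i²)] + 2p(x_{n-1} - x₂)². -/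
/-!
Differencing the FitzHugh–Nagumo lattice along the ring gives a system of the same shape for
`V_i = x_i - x_{i-1}`, `W_i = y_i - y_{i-1}`. In the energy identity for `∑ (V_i² + W_i²)` the
diffusion contributes `2a ∑ V_i (ΔV)_i ≤ 0` (the cyclic discrete Laplacian is negative
semidefinite), the nonlinearity contributes at most `2γ V_i²` by the mean value theorem, the
coupling `2(c - b) V_i W_i` is absorbed by `|c - b| (V_i² + W_i²)`, and the boundary feedback only
touches the indices `1, 2, n`, where it leaves `2p (AB - A²) ≤ 2p B²` with `A = x_n - x_1`,
`B = x_{n-1} - x_2`.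
-/

open Finset

def discreteLaplacian (v : ℕ → ℝ) (i : ℕ) : ℝ := v (i - 1) - 2 * v i + v (i + 1)

def cyclicPred (n i : ℕ) : ℕ := if i = 1 then n else i - 1

/-- The paper's `V_i = X_i - X_{i-1}`, extended by `V_0 = V_n`. -/
noncomputable def cyclicDiff (n : ℕ) (X : ℕ → ℝ) (i : ℕ) : ℝ :=
  if i = 0 then X n - X (n - 1) else X i - X (i - 1)

noncomputable def boundaryFeedback (n : ℕ) (X : ℕ → ℝ) (i : ℕ) : ℝ :=
  if i = 1 then X n - X 1 else if i = n then X 1 - X n else 0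

noncomputable def fhnField (n : ℕ) (a b p : ℝ) (f : ℝ → ℝ) (X Y : ℕ → ℝ) (i : ℕ) : ℝ :=
  a * discreteLaplacian X i + f (X i) - b * Y i + p * boundaryFeedback n X i

section Cyclic

variable {n i : ℕ}

lemma cyclicPred_mem_Icc (hi : i ∈ Icc 1 n) : cyclicPred n i ∈ Icc 1 n := by
  simp only [mem_Icc] at hi ⊢
  unfold cyclicPred
  split_ifs <;> omega

lemma apply_cyclicPred {α : Type*} {X : ℕ → α} (hX : X 0 = X n) (hi : 1 ≤ i) :
    X (cyclicPred n i) = X (i - 1) := by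
  unfold cyclicPred
  split_ifs with h
  · subst h; exact hX.symm
  · rfl

lemma sum_mul_discreteLaplacian_nonpos {v : ℕ → ℝ} (h0 : v 0 = v n) (h1 : v (n + 1) = v 1) :
    ∑ i ∈ Icc 1 n, v i * discreteLaplacian v i ≤ 0 := by
  rcases n.eq_zero_or_pos with rfl | hn
  · simp
  set g : ℕ → ℝ := fun i => v i * (v (i - 1) - v i)
  have hterm : ∀ i ∈ Icc 1 n,
      v i * discreteLaplacian v i = -(v (i + 1) - v i) ^ 2 - (g (i + 1) - g i) := by
    intro i _
    simp only [g, discreteLaplacian, Nat.add_sub_cancel]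
    ring
  have hg : g (n + 1) - g 1 = 0 := by
    simp only [g, Nat.add_sub_cancel, Nat.sub_self, h0, h1]
    ring
  rw [sum_congr rfl hterm, sum_sub_distrib, sum_Icc_sub (by omega) g, hg, sub_zero]
  exact sum_nonpos fun i _ => neg_nonpos.mpr (sq_nonneg _)

variable {X : ℕ → ℝ}

lemma discreteLaplacian_sub_cyclicPred (hX0 : X 0 = X n) (hX1 : X (n + 1) = X 1) (hi : 1 ≤ i) :
    discreteLaplacian X i - discreteLaplacian X (cyclicPred n i) =
      discreteLaplacian (cyclicDiff n X) i := by
  rcases eq_or_ne i 1 with rfl | hi1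
  · simp only [discreteLaplacian, cyclicPred, cyclicDiff, if_true]
    norm_num [hX0, hX1]
    ring
  · rw [cyclicPred, if_neg hi1]
    obtain ⟨j, rfl⟩ : ∃ j, i = j + 2 := ⟨i - 2, by omega⟩
    simp only [discreteLaplacian, cyclicDiff]
    norm_num
    ring

lemma sum_cyclicDiff_mul_discreteLaplacian_nonpos (hn : n ≠ 0) (hX0 : X 0 = X n)
    (hX1 : X (n + 1) = X 1) :
    ∑ i ∈ Icc 1 n, cyclicDiff n X i * discreteLaplacian (cyclicDiff n X) i ≤ 0 := by
  refine sum_mul_discreteLaplacian_nonpos ?_ ?_ <;> simp [cyclicDiff, hn, hX0, hX1]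

end Cyclic

lemma sum_sub_mul_boundaryFeedback_sub {n : ℕ} {X : ℕ → ℝ} (hn : 3 ≤ n) (hX0 : X 0 = X n) :
    ∑ i ∈ Icc 1 n, (X i - X (i - 1)) *
        (boundaryFeedback n X i - boundaryFeedback n X (cyclicPred n i)) =
      (X n - X 1) * (X (n - 1) - X 2) - 3 * (X n - X 1) ^ 2 := by
  have hsub : ({1, 2, n} : Finset ℕ) ⊆ Icc 1 n := by
    intro i hi
    simp only [mem_insert, mem_singleton] at hi
    simp only [mem_Icc]
    omega
  have hzero : ∀ i ∈ Icc 1 n, i ∉ ({1, 2, n} : Finset ℕ) →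
      (X i - X (i - 1)) * (boundaryFeedback n X i - boundaryFeedback n X (cyclicPred n i)) = 0 := by
    intro i hi hi'
    simp only [mem_Icc] at hi
    simp only [mem_insert, mem_singleton, not_or] at hi'
    simp [boundaryFeedback, cyclicPred, hi'.1, hi'.2.2, show i - 1 ≠ 1 by omega,
      show i - 1 ≠ n by omega]
  rw [← sum_subset hsub hzero, sum_insert (by simp; omega), sum_insert (by simp; omega),
    sum_singleton]
  simp only [boundaryFeedback, cyclicPred]
  norm_num [show n ≠ 1 by omega, show 2 ≠ n by omega, show n - 1 ≠ 1 by omega,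
    show n - 1 ≠ n by omega, hX0]
  ring

lemma mul_sub_le_of_deriv_le {f : ℝ → ℝ} {γ : ℝ} (hf : Differentiable ℝ f)
    (hf' : ∀ s, deriv f s ≤ γ) (u v : ℝ) : (f u - f v) * (u - v) ≤ γ * (u - v) ^ 2 := by
  rcases le_total v u with h | h <;>
    linarith [mul_le_mul_of_nonneg_right (image_sub_le_mul_sub_of_deriv_le hf hf' h)
      (sub_nonneg.mpr h)]

lemma two_mul_mul_le_abs_mul (r V W : ℝ) : 2 * r * V * W ≤ |r| * (V ^ 2 + W ^ 2) := by
  rcases le_total 0 r with h | h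
  · rw [abs_of_nonneg h]
    nlinarith [mul_nonneg h (sq_nonneg (V - W))]
  · rw [abs_of_nonpos h]
    nlinarith [mul_nonneg (neg_nonneg.mpr h) (sq_nonneg (V + W))]

lemma fhnField_sub_fhnField_cyclicPred {n i : ℕ} {a b p : ℝ} {f : ℝ → ℝ} {X Y : ℕ → ℝ}
    (hX0 : X 0 = X n) (hX1 : X (n + 1) = X 1) (hY0 : Y 0 = Y n) (hi : 1 ≤ i) :
    fhnField n a b p f X Y i - fhnField n a b p f X Y (cyclicPred n i) =
      a * discreteLaplacian (cyclicDiff n X) i + (f (X i) - f (X (i - 1)))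
        - b * (Y i - Y (i - 1))
        + p * (boundaryFeedback n X i - boundaryFeedback n X (cyclicPred n i)) := by
  rw [← discreteLaplacian_sub_cyclicPred hX0 hX1 hi]
  simp only [fhnField, apply_cyclicPred hX0 hi, apply_cyclicPred hY0 hi]
  ring

lemma hasDerivAt_sum_sq_sub_pred {n : ℕ} {x y : ℕ → ℝ → ℝ} {x' y' : ℕ → ℝ} {t : ℝ}
    (hx0 : x 0 = x n) (hy0 : y 0 = y n) (hx : ∀ i ∈ Icc 1 n, HasDerivAt (x i) (x' i) t)
    (hy : ∀ i ∈ Icc 1 n, HasDerivAt (y i) (y' i) t) :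
    HasDerivAt (fun s => ∑ i ∈ Icc 1 n, ((x i s - x (i - 1) s) ^ 2 + (y i s - y (i - 1) s) ^ 2))
      (∑ i ∈ Icc 1 n, (2 * (x i t - x (i - 1) t) * (x' i - x' (cyclicPred n i))
        + 2 * (y i t - y (i - 1) t) * (y' i - y' (cyclicPred n i)))) t := by
  refine HasDerivAt.fun_sum fun i hi => ?_
  have hi1 : 1 ≤ i := (mem_Icc.mp hi).1
  have hxp := hx _ (cyclicPred_mem_Icc hi)
  have hyp := hy _ (cyclicPred_mem_Icc hi)
  rw [apply_cyclicPred hx0 hi1] at hxp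
  rw [apply_cyclicPred hy0 hi1] at hyp
  convert (((hx i hi).fun_sub hxp).fun_pow 2).fun_add (((hy i hi).fun_sub hyp).fun_pow 2) using 1
  push_cast
  ring

lemma differenced_energy_rate_le {n : ℕ} {a b c δ p γ : ℝ} {f : ℝ → ℝ} {X Y : ℕ → ℝ}
    (hn : 3 ≤ n) (ha : 0 ≤ a) (hp : 0 ≤ p)
    (hf : ∀ u v, (f u - f v) * (u - v) ≤ γ * (u - v) ^ 2)
    (hX0 : X 0 = X n) (hX1 : X (n + 1) = X 1) (hY0 : Y 0 = Y n) :
    (∑ i ∈ Icc 1 n,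
        (2 * (X i - X (i - 1)) *
            (fhnField n a b p f X Y i - fhnField n a b p f X Y (cyclicPred n i))
          + 2 * (Y i - Y (i - 1)) *
            (c * X i - δ * Y i - (c * X (cyclicPred n i) - δ * Y (cyclicPred n i)))))
      + 2 * δ * ∑ i ∈ Icc 1 n, ((X i - X (i - 1)) ^ 2 + (Y i - Y (i - 1)) ^ 2)
      + 4 * p * (X n - X 1) ^ 2
    ≤ (∑ i ∈ Icc 1 n, 2 * ((δ + γ) * (X i - X (i - 1)) ^ 2
          + |c - b| * ((X i - X (i - 1)) ^ 2 + (Y i - Y (i - 1)) ^ 2)))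
      + 2 * p * (X (n - 1) - X 2) ^ 2 := by
  have hsplit : ∀ i ∈ Icc 1 n,
      2 * (X i - X (i - 1)) *
          (fhnField n a b p f X Y i - fhnField n a b p f X Y (cyclicPred n i))
        + 2 * (Y i - Y (i - 1)) *
          (c * X i - δ * Y i - (c * X (cyclicPred n i) - δ * Y (cyclicPred n i)))
      = 2 * a * (cyclicDiff n X i * discreteLaplacian (cyclicDiff n X) i)
        + 2 * p * ((X i - X (i - 1)) *
            (boundaryFeedback n X i - boundaryFeedback n X (cyclicPred n i)))
        + (2 * (X i - X (i - 1)) * (f (X i) - f (X (i - 1)))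
          + 2 * (c - b) * (X i - X (i - 1)) * (Y i - Y (i - 1))
          - 2 * δ * (Y i - Y (i - 1)) ^ 2) := by
    intro i hi
    have hi1 : 1 ≤ i := (mem_Icc.mp hi).1
    have hV : cyclicDiff n X i = X i - X (i - 1) := if_neg (by omega)
    rw [fhnField_sub_fhnField_cyclicPred hX0 hX1 hY0 hi1, apply_cyclicPred hX0 hi1,
      apply_cyclicPred hY0 hi1, hV]
    ring
  rw [sum_congr rfl hsplit, sum_add_distrib, sum_add_distrib, ← mul_sum, ← mul_sum,
    sum_sub_mul_boundaryFeedback_sub hn hX0]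
  have hdiffusion : 2 * a * ∑ i ∈ Icc 1 n,
      cyclicDiff n X i * discreteLaplacian (cyclicDiff n X) i ≤ 0 :=
    mul_nonpos_of_nonneg_of_nonpos (by positivity)
      (sum_cyclicDiff_mul_discreteLaplacian_nonpos (by omega) hX0 hX1)
  have hfeedback : 2 * p * ((X n - X 1) * (X (n - 1) - X 2) - 3 * (X n - X 1) ^ 2)
      + 4 * p * (X n - X 1) ^ 2 ≤ 2 * p * (X (n - 1) - X 2) ^ 2 := by
    nlinarith [mul_nonneg hp (sq_nonneg (X n - X 1 - (X (n - 1) - X 2))),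
      mul_nonneg hp (sq_nonneg (X n - X 1)), mul_nonneg hp (sq_nonneg (X (n - 1) - X 2))]
  have hreaction : ∑ i ∈ Icc 1 n,
        (2 * (X i - X (i - 1)) * (f (X i) - f (X (i - 1)))
          + 2 * (c - b) * (X i - X (i - 1)) * (Y i - Y (i - 1))
          - 2 * δ * (Y i - Y (i - 1)) ^ 2)
      + 2 * δ * ∑ i ∈ Icc 1 n, ((X i - X (i - 1)) ^ 2 + (Y i - Y (i - 1)) ^ 2)
      ≤ ∑ i ∈ Icc 1 n, 2 * ((δ + γ) * (X i - X (i - 1)) ^ 2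
          + |c - b| * ((X i - X (i - 1)) ^ 2 + (Y i - Y (i - 1)) ^ 2)) := by
    rw [mul_sum, ← sum_add_distrib]
    refine sum_le_sum fun i _ => ?_
    have := hf (X i) (X (i - 1))
    have := two_mul_mul_le_abs_mul (c - b) (X i - X (i - 1)) (Y i - Y (i - 1))
    have : 0 ≤ |c - b| * ((X i - X (i - 1)) ^ 2 + (Y i - Y (i - 1)) ^ 2) := by positivity
    linarith
  linarith

theorem fhn_differenced_inequality_general
    (n : ℕ) (hn : 4 ≤ n)
    (a b c δ p γ : ℝ)
    (ha : 0 < a) (hp : 0 < p)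
    (f : ℝ → ℝ) (hf : ContDiff ℝ 1 f)
    (hf2 : ∀ s : ℝ, deriv f s ≤ γ)
    (x y : ℕ → ℝ → ℝ)
    (hbx0 : ∀ t : ℝ, x 0 t = x n t) (hbx1 : ∀ t : ℝ, x (n + 1) t = x 1 t)
    (hby0 : ∀ t : ℝ, y 0 t = y n t)
    (hxode : ∀ i ∈ Finset.Icc 1 n, ∀ t ≥ (0:ℝ),
      HasDerivAt (x i)
        (a * (x (i - 1) t - 2 * x i t + x (i + 1) t) + f (x i t) - b * y i t
          + p * (if i = 1 then x n t - x 1 t else if i = n then x 1 t - x n t else 0)) t)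
    (hyode : ∀ i ∈ Finset.Icc 1 n, ∀ t ≥ (0:ℝ),
      HasDerivAt (y i) (c * x i t - δ * y i t) t) :
    ∀ t ≥ (0:ℝ), ∀ d : ℝ,
      HasDerivAt (fun s => ∑ i ∈ Finset.Icc 1 n,
          ((x i s - x (i - 1) s)^2 + (y i s - y (i - 1) s)^2)) d t →
      d + 2 * δ * (∑ i ∈ Finset.Icc 1 n,
            ((x i t - x (i - 1) t)^2 + (y i t - y (i - 1) t)^2))
        + 4 * p * (x n t - x 1 t)^2
      ≤ (∑ i ∈ Finset.Icc 1 n, 2 * ((δ + γ) * (x i t - x (i - 1) t)^2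
            + |c - b| * ((x i t - x (i - 1) t)^2 + (y i t - y (i - 1) t)^2)))
        + 2 * p * (x (n - 1) t - x 2 t)^2 := by
  intro t ht d hd
  have hE := hasDerivAt_sum_sq_sub_pred (funext hbx0) (funext hby0)
    (x' := fhnField n a b p f (fun j => x j t) (fun j => y j t))
    (y' := fun i => c * x i t - δ * y i t)
    (fun i hi => hxode i hi t ht) (fun i hi => hyode i hi t ht)
  rw [hd.unique hE]
  exact differenced_energy_rate_le (by omega) ha.le hp.le
    (mul_sub_le_of_deriv_le (hf.differentiable one_ne_zero) hf2) (hbx0 t) (hbx1 t) (hby0 t)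

/-- Differenced-system differential inequality for the FHN CNN with boundary feedback. -/
theorem fhn_differenced_inequality
    (n : ℕ) (hn : 4 ≤ n)
    (a b c δ p γ : ℝ)
    (ha : 0 < a) (hb : 0 < b) (hc : 0 < c) (hδ : 0 < δ) (hp : 0 < p) (hγ : 0 < γ)
    (f : ℝ → ℝ) (hf : ContDiff ℝ 1 f)
    (hf2 : ∀ s : ℝ, deriv f s ≤ γ)
    (x y : ℕ → ℝ → ℝ)
    (hbx0 : ∀ t : ℝ, x 0 t = x n t) (hbx1 : ∀ t : ℝ, x (n + 1) t = x 1 t)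
    (hby0 : ∀ t : ℝ, y 0 t = y n t)
    (hxode : ∀ i ∈ Finset.Icc 1 n, ∀ t ≥ (0:ℝ),
      HasDerivAt (x i)
        (a * (x (i - 1) t - 2 * x i t + x (i + 1) t) + f (x i t) - b * y i t
          + p * (if i = 1 then x n t - x 1 t else if i = n then x 1 t - x n t else 0)) t)
    (hyode : ∀ i ∈ Finset.Icc 1 n, ∀ t ≥ (0:ℝ),
      HasDerivAt (y i) (c * x i t - δ * y i t) t) :
    ∀ t ≥ (0:ℝ), ∀ d : ℝ,
      HasDerivAt (fun s => ∑ i ∈ Finset.Icc 1 n,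
          ((x i s - x (i - 1) s)^2 + (y i s - y (i - 1) s)^2)) d t →
      d + 2 * δ * (∑ i ∈ Finset.Icc 1 n,
            ((x i t - x (i - 1) t)^2 + (y i t - y (i - 1) t)^2))
        + 4 * p * (x n t - x 1 t)^2
      ≤ (∑ i ∈ Finset.Icc 1 n, 2 * ((δ + γ) * (x i t - x (i - 1) t)^2
            + |c - b| * ((x i t - x (i - 1) t)^2 + (y i t - y (i - 1) t)^2)))
        + 2 * p * (x (n - 1) t - x 2 t)^2 :=
  fhn_differenced_inequality_general n hn a b c δ p γ ha hp f hf hf2 x y hbx0 hbx1 hby0 hxode hyode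
end
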